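/- Let n ≥ 1, let h : ℝ → ℝ be a smooth 2π-periodic function, and consider the h-bracket {f₁,f₂}_h := Σ_s 2 h(θ_s) q_s (∂f₁/∂θ_s ∂f₂/∂q_s − ∂f₁/∂q_s ∂f₂/∂θ_s) on the open set W := {(θ,q) : q_s > 0, θ_s − θ_t ∉ 2πℤ for s ≠ t}, extended ℂ-bilinearly to complex-valued smooth functions. Define the functions z_s := e^{iθ_s} and μ̃_s := q_s / Π_{j≠s} |e^{iθ_s} − e^{iθ_j}| on W, and write h(z_s) for h(θ_s). Then for all 1 ≤ s, t ≤ n: {z_s, μ̃_t}_h = 2i z_s h(z_s) μ̃_t δ_{st}, and for s ≠ t: {μ̃_s, μ̃_t}_h = i μ̃_s μ̃_t (h(z_s) + h(z_t)) (z_s + z_t)/(z_s − z_t). -/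

import Mathlib

open Real

/-- Partial derivative in the `θ_s` direction. -/
noncomputable def pTheta {n : ℕ} (f : (Fin n → ℝ) × (Fin n → ℝ) → ℝ) (s : Fin n)
    (p : (Fin n → ℝ) × (Fin n → ℝ)) : ℝ :=
  fderiv ℝ f p (Pi.single s 1, 0)

/-- Partial derivative in the `q_s` direction. -/
noncomputable def pQ {n : ℕ} (f : (Fin n → ℝ) × (Fin n → ℝ) → ℝ) (s : Fin n)
    (p : (Fin n → ℝ) × (Fin n → ℝ)) : ℝ :=
  fderiv ℝ f p (0, Pi.single s 1)

/-- The `h`-bracket on real-valued functions. -/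
noncomputable def pbrh {n : ℕ} (h : ℝ → ℝ) (f g : (Fin n → ℝ) × (Fin n → ℝ) → ℝ)
    (p : (Fin n → ℝ) × (Fin n → ℝ)) : ℝ :=
  ∑ s, 2 * h (p.1 s) * p.2 s * (pTheta f s p * pQ g s p - pQ f s p * pTheta g s p)

/-- The `h`-bracket extended `ℂ`-bilinearly to complex-valued functions. -/
noncomputable def pbrhC {n : ℕ} (h : ℝ → ℝ) (f g : (Fin n → ℝ) × (Fin n → ℝ) → ℂ)
    (p : (Fin n → ℝ) × (Fin n → ℝ)) : ℂ :=
  ((pbrh h (fun x => (f x).re) (fun x => (g x).re) p -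
      pbrh h (fun x => (f x).im) (fun x => (g x).im) p : ℝ) : ℂ) +
  Complex.I * ((pbrh h (fun x => (f x).re) (fun x => (g x).im) p +
      pbrh h (fun x => (f x).im) (fun x => (g x).re) p : ℝ) : ℂ)

/-- The phase space `W`: all canonical weights positive, angles distinct mod `2π`. -/
def W (n : ℕ) : Set ((Fin n → ℝ) × (Fin n → ℝ)) :=
  {p | (∀ s, 0 < p.2 s) ∧
    ∀ s t : Fin n, s ≠ t → ∀ k : ℤ, p.1 s - p.1 t ≠ 2 * Real.pi * k}

/-- The eigenvalue function `z_s = e^{iθ_s}`. -/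
noncomputable def zfun {n : ℕ} (s : Fin n) (p : (Fin n → ℝ) × (Fin n → ℝ)) : ℂ :=
  Complex.exp ((p.1 s : ℂ) * Complex.I)

/-- The unnormalized mass `μ̃_s = q_s / Π_{j≠s} |e^{iθ_s} − e^{iθ_j}|`. -/
noncomputable def muT {n : ℕ} (s : Fin n) (p : (Fin n → ℝ) × (Fin n → ℝ)) : ℝ :=
  p.2 s / ∏ j ∈ Finset.univ.erase s, ‖zfun s p - zfun j p‖

variable {n : ℕ}

/-- The θ-coordinate projection as a CLM. -/
noncomputable def Lth (n : ℕ) (r : Fin n) : ((Fin n → ℝ) × (Fin n → ℝ)) →L[ℝ] ℝ :=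
  (ContinuousLinearMap.proj r).comp (ContinuousLinearMap.fst ℝ (Fin n → ℝ) (Fin n → ℝ))

noncomputable def Lqm (n : ℕ) (r : Fin n) : ((Fin n → ℝ) × (Fin n → ℝ)) →L[ℝ] ℝ :=
  (ContinuousLinearMap.proj r).comp (ContinuousLinearMap.snd ℝ (Fin n → ℝ) (Fin n → ℝ))

@[simp] lemma Lth_apply (r : Fin n) (v : (Fin n → ℝ) × (Fin n → ℝ)) : Lth n r v = v.1 r := rfl
@[simp] lemma Lqm_apply (r : Fin n) (v : (Fin n → ℝ) × (Fin n → ℝ)) : Lqm n r v = v.2 r := rfl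

lemma hasFDerivAt_th (r : Fin n) (p : (Fin n → ℝ) × (Fin n → ℝ)) :
    HasFDerivAt (fun p : (Fin n → ℝ) × (Fin n → ℝ) => p.1 r) (Lth n r) p :=
  (Lth n r).hasFDerivAt

lemma hasFDerivAt_qm (r : Fin n) (p : (Fin n → ℝ) × (Fin n → ℝ)) :
    HasFDerivAt (fun p : (Fin n → ℝ) × (Fin n → ℝ) => p.2 r) (Lqm n r) p :=
  (Lqm n r).hasFDerivAt

noncomputable def Nf (t j : Fin n) (p : (Fin n → ℝ) × (Fin n → ℝ)) : ℝ :=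
  2 - 2 * Real.cos (p.1 t - p.1 j)

noncomputable def Pf (t : Fin n) (p : (Fin n → ℝ) × (Fin n → ℝ)) : ℝ :=
  ∏ j ∈ Finset.univ.erase t, Nf t j p

lemma Nf_nonneg (t j : Fin n) (p : (Fin n → ℝ) × (Fin n → ℝ)) : 0 ≤ Nf t j p := by
  have := Real.cos_le_one (p.1 t - p.1 j); unfold Nf; linarith

lemma hasFDerivAt_Nf (t j : Fin n) (p : (Fin n → ℝ) × (Fin n → ℝ)) :
    HasFDerivAt (Nf t j) ((2 * Real.sin (p.1 t - p.1 j)) • (Lth n t - Lth n j)) p := by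
  have h1 : HasFDerivAt (fun p : (Fin n → ℝ) × (Fin n → ℝ) => p.1 t - p.1 j)
      (Lth n t - Lth n j) p := (hasFDerivAt_th t p).sub (hasFDerivAt_th j p)
  have h2 := (Real.hasDerivAt_cos (p.1 t - p.1 j)).comp_hasFDerivAt p h1
  have h3 := (h2.const_mul (2:ℝ)).const_sub 2
  have he : -((2:ℝ) • (-Real.sin (p.1 t - p.1 j)) • (Lth n t - Lth n j)) =
      (2 * Real.sin (p.1 t - p.1 j)) • (Lth n t - Lth n j) := by
    refine ContinuousLinearMap.ext fun v => ?_
    simp only [ContinuousLinearMap.neg_apply, ContinuousLinearMap.smul_apply, smul_smul,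
      smul_eq_mul]
    ring
  rw [← he]
  exact h3

noncomputable def LPf (t : Fin n) (p : (Fin n → ℝ) × (Fin n → ℝ)) :
    ((Fin n → ℝ) × (Fin n → ℝ)) →L[ℝ] ℝ :=
  ∑ j ∈ Finset.univ.erase t, (∏ k ∈ (Finset.univ.erase t).erase j, Nf t k p) •
    ((2 * Real.sin (p.1 t - p.1 j)) • (Lth n t - Lth n j))

lemma hasFDerivAt_Pf (t : Fin n) (p : (Fin n → ℝ) × (Fin n → ℝ)) :
    HasFDerivAt (Pf t) (LPf t p) p :=
  HasFDerivAt.finset_prod (fun j _ => hasFDerivAt_Nf t j p)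


lemma Nf_pos {p : (Fin n → ℝ) × (Fin n → ℝ)} (hW : p ∈ W n) {t j : Fin n} (h : j ≠ t) :
    0 < Nf t j p := by
  have h1 : Real.cos (p.1 t - p.1 j) ≤ 1 := Real.cos_le_one _
  have h2 : Real.cos (p.1 t - p.1 j) ≠ 1 := by
    intro hc
    rcases (Real.cos_eq_one_iff _).1 hc with ⟨k, hk⟩
    exact hW.2 t j (Ne.symm h) k (by rw [← hk]; ring)
  have := lt_of_le_of_ne h1 h2
  unfold Nf; linarith

lemma Pf_pos {p : (Fin n → ℝ) × (Fin n → ℝ)} (hW : p ∈ W n) (t : Fin n) : 0 < Pf t p :=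
  Finset.prod_pos fun j hj => Nf_pos hW (Finset.mem_erase.1 hj).1

lemma abs_z (t j : Fin n) (p : (Fin n → ℝ) × (Fin n → ℝ)) :
    ‖zfun t p - zfun j p‖ = Real.sqrt (Nf t j p) := by
  rw [Complex.norm_def]
  congr 1
  simp only [zfun, Complex.normSq_apply, Complex.sub_re, Complex.sub_im,
    Complex.exp_ofReal_mul_I_re, Complex.exp_ofReal_mul_I_im, Nf, Real.cos_sub]
  nlinarith [Real.sin_sq_add_cos_sq (p.1 t), Real.sin_sq_add_cos_sq (p.1 j)]

lemma sqrt_prod {ι : Type*} (u : Finset ι) (f : ι → ℝ) (hf : ∀ i ∈ u, 0 ≤ f i) :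
    Real.sqrt (∏ i ∈ u, f i) = ∏ i ∈ u, Real.sqrt (f i) := by
  induction u using Finset.cons_induction with
  | empty => simp
  | cons a u ha ih =>
    rw [Finset.prod_cons, Finset.prod_cons, Real.sqrt_mul (hf a (Finset.mem_cons_self a u)),
      ih (fun i hi => hf i (Finset.mem_cons_of_mem hi))]

lemma muT_eq (t : Fin n) (p : (Fin n → ℝ) × (Fin n → ℝ)) :
    muT t p = p.2 t / Real.sqrt (Pf t p) := by
  unfold muT Pf
  rw [sqrt_prod _ _ (fun j _ => Nf_nonneg t j p)]
  congr 1
  exact Finset.prod_congr rfl fun j _ => abs_z t j p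

lemma hasFDerivAt_muT (t : Fin n) (p : (Fin n → ℝ) × (Fin n → ℝ)) (hW : p ∈ W n) :
    HasFDerivAt (muT t)
      (p.2 t • ((-(Real.sqrt (Pf t p) ^ 2)⁻¹) • ((1 / (2 * Real.sqrt (Pf t p))) • LPf t p)) +
        (Real.sqrt (Pf t p))⁻¹ • Lqm n t) p := by
  have hP : (0:ℝ) < Pf t p := Pf_pos hW t
  have hs : Real.sqrt (Pf t p) ≠ 0 := (Real.sqrt_pos.2 hP).ne'
  have h1 := (hasFDerivAt_Pf t p).sqrt hP.ne'
  have h2 := (hasDerivAt_inv hs).comp_hasFDerivAt p h1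
  have h3 := (hasFDerivAt_qm t p).mul h2
  have hfun : muT t = fun p => p.2 t * (Real.sqrt (Pf t p))⁻¹ :=
    funext fun p => by rw [muT_eq, div_eq_mul_inv]
  rw [hfun]
  exact h3

lemma LPf_q (t r : Fin n) (p : (Fin n → ℝ) × (Fin n → ℝ)) :
    LPf t p ((0 : Fin n → ℝ), Pi.single r 1) = 0 := by
  unfold LPf
  rw [ContinuousLinearMap.sum_apply]
  refine Finset.sum_eq_zero fun j _ => ?_
  simp

lemma LPf_th {t r : Fin n} (hrt : r ≠ t) (p : (Fin n → ℝ) × (Fin n → ℝ)) :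
    LPf t p (Pi.single r 1, (0 : Fin n → ℝ)) =
      -((∏ k ∈ (Finset.univ.erase t).erase r, Nf t k p) * (2 * Real.sin (p.1 t - p.1 r))) := by
  unfold LPf
  rw [ContinuousLinearMap.sum_apply]
  rw [Finset.sum_eq_single r]
  · simp [Pi.single_apply, (Ne.symm hrt : t ≠ r)]
  · intro j hj hjr
    have hjt : j ≠ t := (Finset.mem_erase.1 hj).1
    simp [Pi.single_apply, (Ne.symm hrt : t ≠ r), hjr]
  · intro hr
    exact absurd (Finset.mem_erase.mpr ⟨hrt, Finset.mem_univ r⟩) hr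

lemma pQ_muT (t r : Fin n) (p : (Fin n → ℝ) × (Fin n → ℝ)) (hW : p ∈ W n) :
    pQ (muT t) r p = if r = t then (Real.sqrt (Pf t p))⁻¹ else 0 := by
  rw [pQ, (hasFDerivAt_muT t p hW).fderiv]
  by_cases hc : r = t <;> simp [LPf_q, Pi.single_apply, hc]

lemma pTheta_muT {t r : Fin n} (hrt : r ≠ t) (p : (Fin n → ℝ) × (Fin n → ℝ)) (hW : p ∈ W n) :
    pTheta (muT t) r p = muT t p * Real.sin (p.1 t - p.1 r) / Nf t r p := by
  have hP : (0:ℝ) < Pf t p := Pf_pos hW t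
  have hs : (0:ℝ) < Real.sqrt (Pf t p) := Real.sqrt_pos.2 hP
  have hN : (0:ℝ) < Nf t r p := Nf_pos hW hrt
  have hprod : Nf t r p * ∏ k ∈ (Finset.univ.erase t).erase r, Nf t k p = Pf t p := by
    unfold Pf
    exact Finset.mul_prod_erase (Finset.univ.erase t) (fun k => Nf t k p)
      (Finset.mem_erase.mpr ⟨hrt, Finset.mem_univ r⟩)
  rw [pTheta, (hasFDerivAt_muT t p hW).fderiv]
  have hsq : Real.sqrt (Pf t p) ^ 2 = Pf t p := Real.sq_sqrt hP.le
  simp only [ContinuousLinearMap.add_apply, ContinuousLinearMap.smul_apply, LPf_th hrt,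
    Lqm_apply, Pi.zero_apply, smul_eq_mul, mul_zero, add_zero, hsq]
  rw [muT_eq]
  field_simp
  rw [← hprod]
  ring

lemma pTheta_cosθ (s r : Fin n) (p : (Fin n → ℝ) × (Fin n → ℝ)) :
    pTheta (fun p : (Fin n → ℝ) × (Fin n → ℝ) => Real.cos (p.1 s)) r p =
      if r = s then -Real.sin (p.1 s) else 0 := by
  have h : HasFDerivAt (fun p : (Fin n → ℝ) × (Fin n → ℝ) => Real.cos (p.1 s))
      (-Real.sin (p.1 s) • Lth n s) p :=
    by have := (Real.hasDerivAt_cos (p.1 s)).comp_hasFDerivAt p (hasFDerivAt_th s p); exact this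
  rw [pTheta, h.fderiv]
  by_cases hc : r = s <;> simp [Pi.single_apply, hc]

lemma pTheta_sinθ (s r : Fin n) (p : (Fin n → ℝ) × (Fin n → ℝ)) :
    pTheta (fun p : (Fin n → ℝ) × (Fin n → ℝ) => Real.sin (p.1 s)) r p =
      if r = s then Real.cos (p.1 s) else 0 := by
  have h : HasFDerivAt (fun p : (Fin n → ℝ) × (Fin n → ℝ) => Real.sin (p.1 s))
      (Real.cos (p.1 s) • Lth n s) p :=
    by have := (Real.hasDerivAt_sin (p.1 s)).comp_hasFDerivAt p (hasFDerivAt_th s p); exact this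
  rw [pTheta, h.fderiv]
  by_cases hc : r = s <;> simp [Pi.single_apply, hc]

lemma pQ_cosθ (s r : Fin n) (p : (Fin n → ℝ) × (Fin n → ℝ)) :
    pQ (fun p : (Fin n → ℝ) × (Fin n → ℝ) => Real.cos (p.1 s)) r p = 0 := by
  have h : HasFDerivAt (fun p : (Fin n → ℝ) × (Fin n → ℝ) => Real.cos (p.1 s))
      (-Real.sin (p.1 s) • Lth n s) p :=
    by have := (Real.hasDerivAt_cos (p.1 s)).comp_hasFDerivAt p (hasFDerivAt_th s p); exact this
  rw [pQ, h.fderiv]; simp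

lemma pQ_sinθ (s r : Fin n) (p : (Fin n → ℝ) × (Fin n → ℝ)) :
    pQ (fun p : (Fin n → ℝ) × (Fin n → ℝ) => Real.sin (p.1 s)) r p = 0 := by
  have h : HasFDerivAt (fun p : (Fin n → ℝ) × (Fin n → ℝ) => Real.sin (p.1 s))
      (Real.cos (p.1 s) • Lth n s) p :=
    by have := (Real.hasDerivAt_sin (p.1 s)).comp_hasFDerivAt p (hasFDerivAt_th s p); exact this
  rw [pQ, h.fderiv]; simp

lemma pbrh_zero_right (h : ℝ → ℝ) (f : (Fin n → ℝ) × (Fin n → ℝ) → ℝ)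
    (p : (Fin n → ℝ) × (Fin n → ℝ)) : pbrh h f (fun _ => 0) p = 0 := by
  simp [pbrh, pTheta, pQ]

lemma pbrh_zero_left (h : ℝ → ℝ) (f : (Fin n → ℝ) × (Fin n → ℝ) → ℝ)
    (p : (Fin n → ℝ) × (Fin n → ℝ)) : pbrh h (fun _ => 0) f p = 0 := by
  simp [pbrh, pTheta, pQ]

lemma zfun_eq (s : Fin n) (p : (Fin n → ℝ) × (Fin n → ℝ)) :
    zfun s p = (Real.cos (p.1 s) : ℂ) + (Real.sin (p.1 s) : ℂ) * Complex.I := by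
  rw [zfun, Complex.exp_mul_I, Complex.ofReal_cos, Complex.ofReal_sin]

lemma zfun_ne {s t : Fin n} {p : (Fin n → ℝ) × (Fin n → ℝ)} (hW : p ∈ W n) (hst : s ≠ t) :
    zfun s p ≠ zfun t p := by
  intro he
  unfold zfun at he
  rw [Complex.exp_eq_exp_iff_exists_int] at he
  obtain ⟨k, hk⟩ := he
  have h2 := congrArg Complex.im hk
  simp at h2
  exact hW.2 s t hst k (by linarith)

lemma key_identity {s t : Fin n} {p : (Fin n → ℝ) × (Fin n → ℝ)} (hW : p ∈ W n) (hst : s ≠ t) :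
    Complex.I * ((zfun s p + zfun t p) / (zfun s p - zfun t p)) =
      ((2 * Real.sin (p.1 s - p.1 t) / (2 - 2 * Real.cos (p.1 s - p.1 t)) : ℝ) : ℂ) := by
  have hne : zfun s p - zfun t p ≠ 0 := sub_ne_zero.2 (zfun_ne hW hst)
  have hN : (0:ℝ) < 2 - 2 * Real.cos (p.1 s - p.1 t) := Nf_pos hW (Ne.symm hst)
  have hNc : ((2 - 2 * Real.cos (p.1 s - p.1 t) : ℝ) : ℂ) ≠ 0 := Complex.ofReal_ne_zero.2 hN.ne'
  have h1 := Real.sin_sq_add_cos_sq (p.1 s)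
  have h2 := Real.sin_sq_add_cos_sq (p.1 t)
  rw [Complex.ofReal_div, mul_div_assoc', div_eq_div_iff hne hNc]
  rw [zfun_eq, zfun_eq, Real.sin_sub, Real.cos_sub]
  simp only [Complex.ofReal_mul, Complex.ofReal_sub, Complex.ofReal_add, Complex.ofReal_ofNat]
  rw [Complex.ext_iff]
  simp only [Complex.add_re, Complex.add_im, Complex.sub_re, Complex.sub_im, Complex.mul_re,
    Complex.mul_im, Complex.I_re, Complex.I_im, Complex.ofReal_re, Complex.ofReal_im,
    Complex.re_ofNat, Complex.im_ofNat]
  constructor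
  · ring_nf
    linear_combination (2 * Real.sin (p.1 t)) * h1 + (2 * Real.sin (p.1 s)) * h2
  · ring_nf
    linear_combination (-2 * Real.cos (p.1 t)) * h1 + (-2 * Real.cos (p.1 s)) * h2


/-- In the coordinates `z_s = e^{iθ_s}`,
`μ̃_s = q_s/Π_{j≠s}|z_s − z_j|`, the `h`-bracket takes the form
`{z_s, μ̃_t}_h = 2i z_s h(z_s) μ̃_t δ_{st}` and, for `s ≠ t`,
`{μ̃_s, μ̃_t}_h = i μ̃_s μ̃_t (h(z_s)+h(z_t))(z_s+z_t)/(z_s−z_t)`. -/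
theorem statement12 (n : ℕ) (hn : 1 ≤ n) (h : ℝ → ℝ)
    (hsm : ContDiff ℝ (⊤ : ℕ∞) h) (hper : ∀ x, h (x + 2 * Real.pi) = h x)
    (s t : Fin n) :
    ∀ p ∈ W n,
      pbrhC h (zfun s) (fun x => ((muT t x : ℝ) : ℂ)) p =
        2 * Complex.I * zfun s p * (h (p.1 s) : ℂ) * (muT t p : ℂ) *
          (if s = t then 1 else 0) ∧
      (s ≠ t →
        pbrhC h (fun x => ((muT s x : ℝ) : ℂ)) (fun x => ((muT t x : ℝ) : ℂ)) p =
          Complex.I * (muT s p : ℂ) * (muT t p : ℂ) *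
            ((h (p.1 s) : ℂ) + (h (p.1 t) : ℂ)) *
            ((zfun s p + zfun t p) / (zfun s p - zfun t p))) := by
  intro p hW
  have hPs : (0:ℝ) < Pf s p := Pf_pos hW s
  have hPt : (0:ℝ) < Pf t p := Pf_pos hW t
  have hss : (0:ℝ) < Real.sqrt (Pf s p) := Real.sqrt_pos.2 hPs
  have hst' : (0:ℝ) < Real.sqrt (Pf t p) := Real.sqrt_pos.2 hPt
  have hrez : (fun x : (Fin n → ℝ) × (Fin n → ℝ) => (zfun s x).re)
      = fun x => Real.cos (x.1 s) := funext fun x => Complex.exp_ofReal_mul_I_re _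
  have himz : (fun x : (Fin n → ℝ) × (Fin n → ℝ) => (zfun s x).im)
      = fun x => Real.sin (x.1 s) := funext fun x => Complex.exp_ofReal_mul_I_im _
  have hremu : ∀ u : Fin n, (fun x : (Fin n → ℝ) × (Fin n → ℝ) => ((muT u x : ℝ) : ℂ).re)
      = muT u := fun u => funext fun x => Complex.ofReal_re _
  have himmu : ∀ u : Fin n, (fun x : (Fin n → ℝ) × (Fin n → ℝ) => ((muT u x : ℝ) : ℂ).im)
      = fun _ => (0:ℝ) := fun u => funext fun x => Complex.ofReal_im _
  constructor
  · -- claim 1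
    unfold pbrhC
    rw [hrez, himz, hremu, himmu, pbrh_zero_right, pbrh_zero_right]
    have e1 : pbrh h (fun x : (Fin n → ℝ) × (Fin n → ℝ) => Real.cos (x.1 s)) (muT t) p =
        if s = t then 2 * h (p.1 s) * p.2 s * (-Real.sin (p.1 s) * (Real.sqrt (Pf t p))⁻¹)
        else 0 := by
      unfold pbrh
      have hterm : ∀ r : Fin n, 2 * h (p.1 r) * p.2 r *
          (pTheta (fun x : (Fin n → ℝ) × (Fin n → ℝ) => Real.cos (x.1 s)) r p *
              pQ (muT t) r p -
            pQ (fun x : (Fin n → ℝ) × (Fin n → ℝ) => Real.cos (x.1 s)) r p *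
              pTheta (muT t) r p) =
          if r = s then (if s = t then 2 * h (p.1 s) * p.2 s *
            (-Real.sin (p.1 s) * (Real.sqrt (Pf t p))⁻¹) else 0) else 0 := by
        intro r
        rw [pTheta_cosθ, pQ_cosθ, pQ_muT t r p hW]
        by_cases h1 : r = s
        · subst h1
          by_cases h2 : r = t <;> simp [h2]
        · simp [h1]
      rw [Finset.sum_congr rfl fun r _ => hterm r, Finset.sum_ite_eq' Finset.univ s]
      simp
    have e2 : pbrh h (fun x : (Fin n → ℝ) × (Fin n → ℝ) => Real.sin (x.1 s)) (muT t) p =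
        if s = t then 2 * h (p.1 s) * p.2 s * (Real.cos (p.1 s) * (Real.sqrt (Pf t p))⁻¹)
        else 0 := by
      unfold pbrh
      have hterm : ∀ r : Fin n, 2 * h (p.1 r) * p.2 r *
          (pTheta (fun x : (Fin n → ℝ) × (Fin n → ℝ) => Real.sin (x.1 s)) r p *
              pQ (muT t) r p -
            pQ (fun x : (Fin n → ℝ) × (Fin n → ℝ) => Real.sin (x.1 s)) r p *
              pTheta (muT t) r p) =
          if r = s then (if s = t then 2 * h (p.1 s) * p.2 s *
            (Real.cos (p.1 s) * (Real.sqrt (Pf t p))⁻¹) else 0) else 0 := by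
        intro r
        rw [pTheta_sinθ, pQ_sinθ, pQ_muT t r p hW]
        by_cases h1 : r = s
        · subst h1
          by_cases h2 : r = t <;> simp [h2]
        · simp [h1]
      rw [Finset.sum_congr rfl fun r _ => hterm r, Finset.sum_ite_eq' Finset.univ s]
      simp
    rw [e1, e2]
    by_cases hc : s = t
    · subst hc
      simp only [if_pos rfl, mul_one]
      rw [muT_eq, zfun_eq]
      push_cast
      have hI := Complex.I_sq
      linear_combination (-(2:ℂ) * (h (p.1 s) : ℂ) * (p.2 s : ℂ) * Complex.sin (p.1 s) /
        (Real.sqrt (Pf s p) : ℂ)) * hI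
    · simp [hc]
  · -- claim 2
    intro hst
    have hNst : (0:ℝ) < Nf s t p := Nf_pos hW (Ne.symm hst)
    unfold pbrhC
    rw [hremu, hremu, himmu, himmu, pbrh_zero_right, pbrh_zero_right, pbrh_zero_left]
    have hsum : pbrh h (muT s) (muT t) p =
        muT s p * muT t p * (h (p.1 s) + h (p.1 t)) *
          (2 * Real.sin (p.1 s - p.1 t) / (2 - 2 * Real.cos (p.1 s - p.1 t))) := by
      unfold pbrh
      have hterm : ∀ r : Fin n, 2 * h (p.1 r) * p.2 r *
          (pTheta (muT s) r p * pQ (muT t) r p - pQ (muT s) r p * pTheta (muT t) r p) =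
          (if r = t then 2 * h (p.1 t) * p.2 t *
              (pTheta (muT s) t p * (Real.sqrt (Pf t p))⁻¹) else 0) +
          (if r = s then -(2 * h (p.1 s) * p.2 s *
              ((Real.sqrt (Pf s p))⁻¹ * pTheta (muT t) s p)) else 0) := by
        intro r
        rw [pQ_muT t r p hW, pQ_muT s r p hW]
        by_cases h1 : r = t
        · subst h1
          have h2 := Ne.symm hst
          simp [if_neg h2]
          try ring
        · by_cases h2 : r = s
          · subst h2
            simp [if_neg h1]
            try ring
          · simp [h1, h2]
      rw [Finset.sum_congr rfl fun r _ => hterm r, Finset.sum_add_distrib,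
        Finset.sum_ite_eq' Finset.univ t, Finset.sum_ite_eq' Finset.univ s]
      simp only [Finset.mem_univ, if_pos]
      rw [pTheta_muT (Ne.symm hst) p hW, pTheta_muT hst p hW]
      have hNsym : Nf t s p = Nf s t p := by
        unfold Nf
        rw [show p.1 t - p.1 s = -(p.1 s - p.1 t) by ring, Real.cos_neg]
      have hsin : Real.sin (p.1 t - p.1 s) = -Real.sin (p.1 s - p.1 t) := by
        rw [show p.1 t - p.1 s = -(p.1 s - p.1 t) by ring, Real.sin_neg]
      rw [hNsym, hsin, muT_eq s p, muT_eq t p]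
      have hNf : Nf s t p = 2 - 2 * Real.cos (p.1 s - p.1 t) := rfl
      rw [hNf] at *
      field_simp
      ring
    rw [hsum]
    rw [show Complex.I * (muT s p : ℂ) * (muT t p : ℂ) * ((h (p.1 s) : ℂ) + (h (p.1 t) : ℂ)) *
        ((zfun s p + zfun t p) / (zfun s p - zfun t p)) =
        ((muT s p : ℂ) * (muT t p : ℂ) * ((h (p.1 s) : ℂ) + (h (p.1 t) : ℂ))) *
        (Complex.I * ((zfun s p + zfun t p) / (zfun s p - zfun t p))) by ring,
      key_identity hW hst]
    push_cast
    ring
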